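/- Let ε ≥ 0 and R > 0, and let w, ψ : ℝ × ℝ² → ℝ be smooth functions such that for every t ∈ ℝ: on Ω, ∂_t(w − ε·Δw) = (1/R)·Δw + R·ψ_θ + J(ψ, w − ε·Δw) and ∂_t(ε·Δ²ψ − Δψ) = −(1/R)·Δ²ψ + ε·R·Δ(w_θ) + J(Δψ − ε·Δ²ψ, ψ) + ε·J(Δw, w), and on ∂Ω, w(t,·) = 0, ψ(t,·) = 0 and ∇ψ(t,·) = 0. Define E(t) = ‖w‖² + ε‖∇w‖² + ‖∇ψ‖² + ε‖Δψ‖², I₁(t) = ‖∇w‖² + ‖Δψ‖², and I₂(t) = ⟨ψ_θ, w − ε·Δw⟩, where all spatial norms and inner products are taken at time t. Then for every t, E'(t) = −(2/R)·I₁(t) + 2R·I₂(t). -/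

import Mathlib

/-!
Differentiating under the integral sign, `E'` is a sum of `L²` pairings of `w`, `ψ` with their
time derivatives. Every integration by parts needed afterwards is one fact: the divergence of a
smooth field vanishing on the unit circle integrates to zero over the disk (Fubini and the
fundamental theorem of calculus on each chord). Green's identities move the derivatives so
that `E' = 2⟨w, ∂ₜ(w - εΔw)⟩ + 2⟨ψ, ∂ₜ(εΔ²ψ - Δψ)⟩`. After substituting the equations of motion,
the Jacobian terms cancel by the cyclic symmetry of `∫ f J(g, h)`, the two azimuthal terms
combine because `∂_θ` is skew and commutes with `Δ`, and `-(2/R) I₁ + 2R I₂` is what is left.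
-/

open MeasureTheory

noncomputable section

/-- Partial derivative with respect to the first (x) variable. -/
def pdx (f : ℝ × ℝ → ℝ) : ℝ × ℝ → ℝ := fun p => deriv (fun x => f (x, p.2)) p.1

/-- Partial derivative with respect to the second (y) variable. -/
def pdy (f : ℝ × ℝ → ℝ) : ℝ × ℝ → ℝ := fun p => deriv (fun y => f (p.1, y)) p.2

/-- The Laplacian Δf = f_xx + f_yy. -/
def lap (f : ℝ × ℝ → ℝ) : ℝ × ℝ → ℝ := fun p => pdx (pdx f) p + pdy (pdy f) p

/-- The azimuthal derivative f_θ = x f_y − y f_x. -/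
def azim (f : ℝ × ℝ → ℝ) : ℝ × ℝ → ℝ := fun p => p.1 * pdy f p - p.2 * pdx f p

/-- The Jacobian (advection) bilinear form J(f,g) = f_x g_y − f_y g_x. -/
def jac (f g : ℝ × ℝ → ℝ) : ℝ × ℝ → ℝ := fun p => pdx f p * pdy g p - pdy f p * pdx g p

/-- The open unit disk Ω. -/
def disk : Set (ℝ × ℝ) := {p | p.1 ^ 2 + p.2 ^ 2 < 1}

/-- The unit circle ∂Ω. -/
def bdry : Set (ℝ × ℝ) := {p | p.1 ^ 2 + p.2 ^ 2 = 1}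

/-- The L² inner product ⟨f,g⟩ = ∫_Ω f g dA. -/
def ip (f g : ℝ × ℝ → ℝ) : ℝ := ∫ p in disk, f p * g p

/-- The squared L² norm ‖f‖² over Ω. -/
def nsq (f : ℝ × ℝ → ℝ) : ℝ := ∫ p in disk, (f p) ^ 2

/-- The squared L² norm of the gradient: ‖∇f‖² = ‖f_x‖² + ‖f_y‖². -/
def gradNsq (f : ℝ × ℝ → ℝ) : ℝ := nsq (pdx f) + nsq (pdy f)

open scoped ContDiff

open Set Function

section DirectionalDerivatives

variable {E : Type*} [NormedAddCommGroup E] [NormedSpace ℝ E] {f : E → ℝ}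

theorem fderiv_fderiv_apply_comm (hf : ContDiff ℝ 2 f) (x u v : E) :
    fderiv ℝ (fun y => fderiv ℝ f y v) x u = fderiv ℝ (fun y => fderiv ℝ f y u) x v := by
  have hf' : Differentiable ℝ (fderiv ℝ f) :=
    (hf.fderiv_right (m := 1) le_rfl).differentiable one_ne_zero
  rw [fderiv_clm_apply (hf' x) (differentiableAt_const v),
    fderiv_clm_apply (hf' x) (differentiableAt_const u)]
  simpa using hf.contDiffAt.isSymmSndFDerivAt (by simp) u v

end DirectionalDerivatives

section PlanarCalculus

variable {f g : ℝ × ℝ → ℝ}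

theorem hasDerivAt_pdx {p : ℝ × ℝ} (hf : DifferentiableAt ℝ f p) :
    HasDerivAt (fun x => f (x, p.2)) (pdx f p) p.1 :=
  (hf.comp p.1 ((hasDerivAt_id p.1).prodMk (hasDerivAt_const p.1 p.2)).differentiableAt).hasDerivAt

theorem hasDerivAt_pdy {p : ℝ × ℝ} (hf : DifferentiableAt ℝ f p) :
    HasDerivAt (fun y => f (p.1, y)) (pdy f p) p.2 :=
  (hf.comp p.2 ((hasDerivAt_const p.2 p.1).prodMk (hasDerivAt_id p.2)).differentiableAt).hasDerivAt

theorem pdx_eq_fderiv (hf : Differentiable ℝ f) : pdx f = fun p => fderiv ℝ f p (1, 0) := by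
  funext p
  have hline : HasDerivAt (fun x : ℝ => (x, p.2)) (1, 0) p.1 :=
    (hasDerivAt_id p.1).prodMk (hasDerivAt_const p.1 p.2)
  exact ((hf p).hasFDerivAt.comp_hasDerivAt p.1 hline).deriv

theorem pdy_eq_fderiv (hf : Differentiable ℝ f) : pdy f = fun p => fderiv ℝ f p (0, 1) := by
  funext p
  have hline : HasDerivAt (fun y : ℝ => (p.1, y)) (0, 1) p.2 :=
    (hasDerivAt_const p.2 p.1).prodMk (hasDerivAt_id p.2)
  exact ((hf p).hasFDerivAt.comp_hasDerivAt p.2 hline).deriv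

theorem ContDiff.continuous_pdx (hf : ContDiff ℝ 1 f) : Continuous (pdx f) := by
  rw [pdx_eq_fderiv (hf.differentiable one_ne_zero)]
  exact (hf.continuous_fderiv one_ne_zero).clm_apply continuous_const

@[fun_prop]
theorem ContDiff.pdx (hf : ContDiff ℝ ∞ f) : ContDiff ℝ ∞ (pdx f) := by
  rw [pdx_eq_fderiv (hf.differentiable (by simp))]
  exact (hf.fderiv_right (m := ∞) le_rfl).clm_apply contDiff_const

@[fun_prop]
theorem ContDiff.pdy (hf : ContDiff ℝ ∞ f) : ContDiff ℝ ∞ (pdy f) := by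
  rw [pdy_eq_fderiv (hf.differentiable (by simp))]
  exact (hf.fderiv_right (m := ∞) le_rfl).clm_apply contDiff_const

theorem pdx_add (hf : Differentiable ℝ f) (hg : Differentiable ℝ g) :
    pdx (fun p => f p + g p) = fun p => pdx f p + pdx g p :=
  funext fun p => ((hasDerivAt_pdx (hf p)).add (hasDerivAt_pdx (hg p))).deriv

theorem pdy_add (hf : Differentiable ℝ f) (hg : Differentiable ℝ g) :
    pdy (fun p => f p + g p) = fun p => pdy f p + pdy g p :=
  funext fun p => ((hasDerivAt_pdy (hf p)).add (hasDerivAt_pdy (hg p))).deriv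

theorem pdx_sub (hf : Differentiable ℝ f) (hg : Differentiable ℝ g) :
    pdx (fun p => f p - g p) = fun p => pdx f p - pdx g p :=
  funext fun p => ((hasDerivAt_pdx (hf p)).sub (hasDerivAt_pdx (hg p))).deriv

theorem pdy_sub (hf : Differentiable ℝ f) (hg : Differentiable ℝ g) :
    pdy (fun p => f p - g p) = fun p => pdy f p - pdy g p :=
  funext fun p => ((hasDerivAt_pdy (hf p)).sub (hasDerivAt_pdy (hg p))).deriv

theorem pdx_mul (hf : Differentiable ℝ f) (hg : Differentiable ℝ g) :
    pdx (fun p => f p * g p) = fun p => pdx f p * g p + f p * pdx g p :=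
  funext fun p => ((hasDerivAt_pdx (hf p)).mul (hasDerivAt_pdx (hg p))).deriv

theorem pdy_mul (hf : Differentiable ℝ f) (hg : Differentiable ℝ g) :
    pdy (fun p => f p * g p) = fun p => pdy f p * g p + f p * pdy g p :=
  funext fun p => ((hasDerivAt_pdy (hf p)).mul (hasDerivAt_pdy (hg p))).deriv

theorem pdx_neg (f : ℝ × ℝ → ℝ) : pdx (fun p => -f p) = fun p => -pdx f p :=
  funext fun _ => deriv.neg

theorem pdy_neg (f : ℝ × ℝ → ℝ) : pdy (fun p => -f p) = fun p => -pdy f p :=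
  funext fun _ => deriv.neg

theorem pdx_const (c : ℝ) : pdx (fun _ => c) = fun _ => 0 := by
  funext; simp [pdx]

theorem pdy_const (c : ℝ) : pdy (fun _ => c) = fun _ => 0 := by
  funext; simp [pdy]

theorem pdx_fst : pdx (fun p => p.1) = fun _ => 1 := by
  funext; simp [pdx]

theorem pdy_fst : pdy (fun p => p.1) = fun _ => 0 := by
  funext; simp [pdy]

theorem pdx_snd : pdx (fun p => p.2) = fun _ => 0 := by
  funext; simp [pdx]

theorem pdy_snd : pdy (fun p => p.2) = fun _ => 1 := by
  funext; simp [pdy]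

theorem pdy_pdx (hf : ContDiff ℝ ∞ f) : pdy (pdx f) = pdx (pdy f) := by
  have hd : Differentiable ℝ f := hf.differentiable (by simp)
  rw [pdx_eq_fderiv (hf.pdy.differentiable (by simp)),
    pdy_eq_fderiv (hf.pdx.differentiable (by simp)), pdx_eq_fderiv hd, pdy_eq_fderiv hd]
  exact funext fun p => fderiv_fderiv_apply_comm (hf.of_le (by norm_cast)) p _ _

@[fun_prop]
theorem ContDiff.lap (hf : ContDiff ℝ ∞ f) : ContDiff ℝ ∞ (lap f) :=
  hf.pdx.pdx.add hf.pdy.pdy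

@[fun_prop]
theorem ContDiff.azim (hf : ContDiff ℝ ∞ f) : ContDiff ℝ ∞ (azim f) :=
  (contDiff_fst.mul hf.pdy).sub (contDiff_snd.mul hf.pdx)

@[fun_prop]
theorem ContDiff.jac (hf : ContDiff ℝ ∞ f) (hg : ContDiff ℝ ∞ g) :
    ContDiff ℝ ∞ (jac f g) :=
  (hf.pdx.mul hg.pdy).sub (hf.pdy.mul hg.pdx)

theorem lap_azim (hf : ContDiff ℝ ∞ f) : lap (azim f) = azim (lap f) := by
  unfold lap azim
  simp (disch := fun_prop (disch := simp)) only [pdx_add, pdy_add, pdx_sub, pdy_sub,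
    pdx_mul, pdy_mul, pdx_fst, pdy_fst, pdx_snd, pdy_snd, pdx_const, pdy_const, pdy_pdx]
  funext p; ring

end PlanarCalculus

theorem measurableSet_disk : MeasurableSet disk :=
  (isOpen_lt (by fun_prop) continuous_const).measurableSet

theorem disk_subset_closedBall : disk ⊆ Metric.closedBall 0 1 := by
  intro p (hp : p.1 ^ 2 + p.2 ^ 2 < 1)
  simp only [Metric.mem_closedBall, dist_zero_right, Prod.norm_def, Real.norm_eq_abs, max_le_iff,
    abs_le]
  refine ⟨⟨?_, ?_⟩, ?_, ?_⟩ <;> nlinarith [sq_nonneg p.1, sq_nonneg p.2]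

theorem Continuous.integrableOn_disk {f : ℝ × ℝ → ℝ} (hf : Continuous f) :
    IntegrableOn f disk :=
  (hf.continuousOn.integrableOn_compact (isCompact_closedBall 0 1)).mono_set disk_subset_closedBall

theorem mk_mem_disk_iff (x y : ℝ) :
    (x, y) ∈ disk ↔ x ∈ Ioo (-√(1 - y ^ 2)) √(1 - y ^ 2) := by
  rw [mem_Ioo, ← abs_lt, Real.lt_sqrt (abs_nonneg x), sq_abs]
  exact (lt_sub_iff_add_lt (a := x ^ 2)).symm

theorem integral_pdx_disk_eq_zero {h : ℝ × ℝ → ℝ} (hh : ContDiff ℝ 1 h)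
    (hb : ∀ p ∈ bdry, h p = 0) : ∫ p in disk, pdx h p = 0 := by
  have hint : Integrable (disk.indicator (pdx h)) :=
    (integrable_indicator_iff measurableSet_disk).2 hh.continuous_pdx.integrableOn_disk
  rw [← integral_indicator measurableSet_disk, Measure.volume_eq_prod,
    integral_prod_symm _ (by rwa [← Measure.volume_eq_prod])]
  refine integral_eq_zero_of_ae (Filter.Eventually.of_forall fun y => ?_)
  set c := √(1 - y ^ 2)
  have hslice : (fun x => disk.indicator (pdx h) (x, y))
      = (Ioo (-c) c).indicator (fun x => pdx h (x, y)) := by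
    ext x; simp only [indicator, mk_mem_disk_iff, c]
  -- when `y ^ 2 > 1` the chord is empty: `√` of a negative number is `0`, so `c = -c`
  have hends : h (c, y) = h (-c, y) := by
    rcases le_or_gt (y ^ 2) 1 with hy | hy
    · have hc : c ^ 2 = 1 - y ^ 2 := Real.sq_sqrt (by linarith)
      rw [hb _ (by simp [bdry, hc]), hb _ (by simp [bdry, hc])]
    · rw [show c = 0 from Real.sqrt_eq_zero'.2 (by linarith), neg_zero]
  have hcont : Continuous fun x => pdx h (x, y) :=
    hh.continuous_pdx.comp (continuous_id.prodMk continuous_const)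
  simp only [Pi.zero_apply]
  rw [hslice, integral_indicator measurableSet_Ioo, ← integral_Ioc_eq_integral_Ioo,
    ← intervalIntegral.integral_of_le (by simp [c]),
    intervalIntegral.integral_eq_sub_of_hasDerivAt (f := fun x => h (x, y))
      (fun x _ => hasDerivAt_pdx (hh.differentiable one_ne_zero (x, y)))
      (hcont.intervalIntegrable _ _), hends, sub_self]

theorem integral_pdy_disk_eq_zero {h : ℝ × ℝ → ℝ} (hh : ContDiff ℝ 1 h)
    (hb : ∀ p ∈ bdry, h p = 0) : ∫ p in disk, pdy h p = 0 := by
  have hswap : Prod.swap ⁻¹' disk = disk := by ext p; simp [disk, add_comm]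
  have := (Measure.measurePreserving_swap (μ := volume) (ν := volume)).setIntegral_preimage_emb
    MeasurableEquiv.prodComm.measurableEmbedding (pdx (h ∘ Prod.swap)) disk
  rw [hswap, ← Measure.volume_eq_prod] at this
  rw [show pdy h = pdx (h ∘ Prod.swap) ∘ Prod.swap from rfl]
  exact this.trans (integral_pdx_disk_eq_zero (hh.comp (contDiff_snd.prodMk contDiff_fst))
    fun p hp => hb _ (by simpa [bdry, add_comm] using hp))

def vanishingFieldDivergences : Submodule ℝ (ℝ × ℝ → ℝ) where
  carrier := {f | ∃ F G : ℝ × ℝ → ℝ, ContDiff ℝ ∞ F ∧ ContDiff ℝ ∞ G ∧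
    (∀ p ∈ bdry, F p = 0 ∧ G p = 0) ∧ f = fun p => pdx F p + pdy G p}
  zero_mem' := ⟨0, 0, contDiff_const, contDiff_const, by simp, by funext; simp [pdx, pdy]⟩
  add_mem' := by
    rintro _ _ ⟨F₁, G₁, hF₁, hG₁, h₁, rfl⟩ ⟨F₂, G₂, hF₂, hG₂, h₂, rfl⟩
    refine ⟨fun p => F₁ p + F₂ p, fun p => G₁ p + G₂ p, hF₁.add hF₂, hG₁.add hG₂,
      fun p hp => by simp [h₁ p hp, h₂ p hp], ?_⟩
    simp (disch := fun_prop (disch := simp)) only [pdx_add, pdy_add]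
    funext p; simp only [Pi.add_apply]; ring
  smul_mem' := by
    rintro c _ ⟨F, G, hF, hG, h, rfl⟩
    refine ⟨fun p => c * F p, fun p => c * G p, contDiff_const.mul hF, contDiff_const.mul hG,
      fun p hp => by simp [h p hp], ?_⟩
    simp (disch := fun_prop (disch := simp)) only [pdx_mul, pdy_mul, pdx_const, pdy_const]
    funext p; simp only [Pi.smul_apply, smul_eq_mul]; ring

theorem setIntegral_disk_eq_zero_of_mem {f : ℝ × ℝ → ℝ}
    (hf : f ∈ vanishingFieldDivergences) : ∫ p in disk, f p = 0 := by
  obtain ⟨F, G, hF, hG, hb, rfl⟩ := hf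
  rw [integral_add hF.pdx.continuous.integrableOn_disk hG.pdy.continuous.integrableOn_disk,
    integral_pdx_disk_eq_zero (hF.of_le (by norm_cast)) fun p hp => (hb p hp).1,
    integral_pdy_disk_eq_zero (hG.of_le (by norm_cast)) fun p hp => (hb p hp).2, add_zero]

theorem setIntegral_disk_eq_of_sub_mem {f g : ℝ × ℝ → ℝ} (hf : Continuous f)
    (hg : Continuous g) (hfg : (fun p => f p - g p) ∈ vanishingFieldDivergences) :
    ∫ p in disk, f p = ∫ p in disk, g p := by
  rw [← sub_eq_zero, ← integral_sub hf.integrableOn_disk hg.integrableOn_disk]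
  exact setIntegral_disk_eq_zero_of_mem hfg

section GreenIdentities

variable {a b f g h : ℝ × ℝ → ℝ}

theorem mul_lap_add_grad_mem (ha : ContDiff ℝ ∞ a) (hf : ContDiff ℝ ∞ f)
    (ha₀ : ∀ p ∈ bdry, a p = 0) :
    (fun p => a p * lap f p + (pdx a p * pdx f p + pdy a p * pdy f p))
      ∈ vanishingFieldDivergences := by
  refine ⟨fun p => a p * pdx f p, fun p => a p * pdy f p, by fun_prop, by fun_prop,
    fun p hp => by simp [ha₀ p hp], ?_⟩
  simp (disch := fun_prop (disch := simp)) only [pdx_mul, pdy_mul]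
  funext p; simp only [lap]; ring

theorem mul_lap_sub_lap_mul_mem (hb : ContDiff ℝ ∞ b) (hg : ContDiff ℝ ∞ g)
    (hb₀ : ∀ p ∈ bdry, b p = 0 ∧ pdx b p = 0 ∧ pdy b p = 0) :
    (fun p => b p * lap g p - lap b p * g p) ∈ vanishingFieldDivergences := by
  refine ⟨fun p => b p * pdx g p - pdx b p * g p, fun p => b p * pdy g p - pdy b p * g p,
    by fun_prop, by fun_prop, fun p hp => by simp [hb₀ p hp], ?_⟩
  simp (disch := fun_prop (disch := simp)) only [pdx_sub, pdy_sub, pdx_mul, pdy_mul]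
  funext p; simp only [lap]; ring

theorem mul_azim_add_azim_mul_mem (ha : ContDiff ℝ ∞ a) (hf : ContDiff ℝ ∞ f)
    (ha₀ : ∀ p ∈ bdry, a p = 0) :
    (fun p => a p * azim f p + azim a p * f p) ∈ vanishingFieldDivergences := by
  refine ⟨fun p => -(p.2 * (a p * f p)), fun p => p.1 * (a p * f p), by fun_prop, by fun_prop,
    fun p hp => by simp [ha₀ p hp], ?_⟩
  simp (disch := fun_prop (disch := simp)) only [pdx_neg, pdx_mul, pdy_mul, pdx_snd, pdy_fst]
  funext p; simp only [azim]; ring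

theorem mul_jac_add_mul_jac_mem (hf : ContDiff ℝ ∞ f) (hg : ContDiff ℝ ∞ g)
    (hh : ContDiff ℝ ∞ h) (hf₀ : ∀ p ∈ bdry, f p = 0) :
    (fun p => f p * jac g h p + g p * jac f h p) ∈ vanishingFieldDivergences := by
  refine ⟨fun p => f p * g p * pdy h p, fun p => -(f p * g p * pdx h p), by fun_prop,
    by fun_prop, fun p hp => by simp [hf₀ p hp], ?_⟩
  simp (disch := fun_prop (disch := simp)) only [pdy_neg, pdx_mul, pdy_mul, pdy_pdx]
  funext p; simp only [jac]; ring

end GreenIdentities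

section TimeDerivative

variable {E : Type*} [NormedAddCommGroup E] [NormedSpace ℝ E] {w : ℝ → E → ℝ}

def timeDeriv (w : ℝ → E → ℝ) : ℝ → E → ℝ := fun t p => deriv (fun s => w s p) t

theorem hasDerivAt_timeDeriv (hw : Differentiable ℝ (uncurry w)) (t : ℝ) (p : E) :
    HasDerivAt (fun s => w s p) (timeDeriv w t p) t := by
  have := (hw (t, p)).hasFDerivAt.comp_hasDerivAt t
    ((hasDerivAt_id t).prodMk (hasDerivAt_const t p))
  exact this.differentiableAt.hasDerivAt

theorem uncurry_timeDeriv_eq_fderiv (hw : Differentiable ℝ (uncurry w)) :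
    uncurry (timeDeriv w) = fun q => fderiv ℝ (uncurry w) q (1, 0) := by
  funext q
  exact ((hw q).hasFDerivAt.comp_hasDerivAt q.1
    ((hasDerivAt_id q.1).prodMk (hasDerivAt_const q.1 q.2))).deriv

theorem contDiff_uncurry_timeDeriv (hw : ContDiff ℝ ∞ (uncurry w)) :
    ContDiff ℝ ∞ (uncurry (timeDeriv w)) := by
  rw [uncurry_timeDeriv_eq_fderiv (hw.differentiable (by simp))]
  exact (hw.fderiv_right (m := ∞) le_rfl).clm_apply contDiff_const

theorem hasDerivAt_setIntegral_of_isBounded [MeasurableSpace E] [BorelSpace E] [ProperSpace E]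
    {μ : Measure E} [IsFiniteMeasureOnCompacts μ] {s : Set E} {n : WithTop ℕ∞}
    (hw : ContDiff ℝ n (uncurry w)) (hn : n ≠ 0) (hs : Bornology.IsBounded s)
    (hsm : MeasurableSet s) (t : ℝ) :
    HasDerivAt (fun r => ∫ p in s, w r p ∂μ) (∫ p in s, timeDeriv w t p ∂μ) t := by
  have hw' : Continuous (uncurry (timeDeriv w)) := by
    rw [uncurry_timeDeriv_eq_fderiv (hw.differentiable hn)]
    exact (hw.continuous_fderiv hn).clm_apply continuous_const
  obtain ⟨C, hC⟩ := ((isCompact_Icc (a := t - 1) (b := t + 1)).prod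
    hs.isCompact_closure).exists_bound_of_continuousOn hw'.continuousOn
  have hslice {f : ℝ → E → ℝ} (hf : Continuous (uncurry f)) (r : ℝ) : Continuous (f r) :=
    hf.comp (continuous_const.prodMk continuous_id)
  refine (hasDerivAt_integral_of_dominated_loc_of_deriv_le (bound := fun _ => C)
    (Metric.ball_mem_nhds t one_pos)
    (.of_forall fun r => (hslice hw.continuous r).aestronglyMeasurable)
    (((hslice hw.continuous t).continuousOn.integrableOn_compact hs.isCompact_closure).mono_set
      subset_closure)
    (hslice hw' t).aestronglyMeasurable
    (ae_restrict_of_forall_mem hsm fun p hp r hr => hC (r, p) ⟨?_, subset_closure hp⟩)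
    (integrableOn_const hs.measure_lt_top.ne)
    (.of_forall fun p r _ => hasDerivAt_timeDeriv (hw.differentiable hn) r p)).2
  rw [Metric.mem_ball, Real.dist_eq, abs_lt] at hr
  constructor <;> linarith [hr.1, hr.2]

end TimeDerivative

section PlanarFlows

variable {w : ℝ → ℝ × ℝ → ℝ}

theorem uncurry_pdx_eq_fderiv (hw : Differentiable ℝ (uncurry w)) :
    uncurry (fun s => pdx (w s)) = fun q => fderiv ℝ (uncurry w) q (0, (1, 0)) := by
  funext q
  exact ((hw q).hasFDerivAt.comp_hasDerivAt q.2.1 ((hasDerivAt_const q.2.1 q.1).prodMk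
    ((hasDerivAt_id q.2.1).prodMk (hasDerivAt_const q.2.1 q.2.2)))).deriv

theorem uncurry_pdy_eq_fderiv (hw : Differentiable ℝ (uncurry w)) :
    uncurry (fun s => pdy (w s)) = fun q => fderiv ℝ (uncurry w) q (0, (0, 1)) := by
  funext q
  exact ((hw q).hasFDerivAt.comp_hasDerivAt q.2.2 ((hasDerivAt_const q.2.2 q.1).prodMk
    ((hasDerivAt_const q.2.2 q.2.1).prodMk (hasDerivAt_id q.2.2)))).deriv

theorem contDiff_uncurry_pdx (hw : ContDiff ℝ ∞ (uncurry w)) :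
    ContDiff ℝ ∞ (uncurry fun s => pdx (w s)) := by
  rw [uncurry_pdx_eq_fderiv (hw.differentiable (by simp))]
  exact (hw.fderiv_right (m := ∞) le_rfl).clm_apply contDiff_const

theorem contDiff_uncurry_pdy (hw : ContDiff ℝ ∞ (uncurry w)) :
    ContDiff ℝ ∞ (uncurry fun s => pdy (w s)) := by
  rw [uncurry_pdy_eq_fderiv (hw.differentiable (by simp))]
  exact (hw.fderiv_right (m := ∞) le_rfl).clm_apply contDiff_const

theorem contDiff_uncurry_lap (hw : ContDiff ℝ ∞ (uncurry w)) :
    ContDiff ℝ ∞ (uncurry fun s => lap (w s)) :=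
  (contDiff_uncurry_pdx (contDiff_uncurry_pdx hw)).add
    (contDiff_uncurry_pdy (contDiff_uncurry_pdy hw))

theorem timeDeriv_pdx (hw : ContDiff ℝ ∞ (uncurry w)) :
    timeDeriv (fun s => pdx (w s)) = fun s => pdx (timeDeriv w s) := by
  have hd := hw.differentiable (by simp)
  apply uncurry_injective
  rw [uncurry_timeDeriv_eq_fderiv ((contDiff_uncurry_pdx hw).differentiable (by simp)),
    uncurry_pdx_eq_fderiv ((contDiff_uncurry_timeDeriv hw).differentiable (by simp)),
    uncurry_pdx_eq_fderiv hd, uncurry_timeDeriv_eq_fderiv hd]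
  exact funext fun q => fderiv_fderiv_apply_comm (hw.of_le (by norm_cast)) q _ _

theorem timeDeriv_pdy (hw : ContDiff ℝ ∞ (uncurry w)) :
    timeDeriv (fun s => pdy (w s)) = fun s => pdy (timeDeriv w s) := by
  have hd := hw.differentiable (by simp)
  apply uncurry_injective
  rw [uncurry_timeDeriv_eq_fderiv ((contDiff_uncurry_pdy hw).differentiable (by simp)),
    uncurry_pdy_eq_fderiv ((contDiff_uncurry_timeDeriv hw).differentiable (by simp)),
    uncurry_pdy_eq_fderiv hd, uncurry_timeDeriv_eq_fderiv hd]
  exact funext fun q => fderiv_fderiv_apply_comm (hw.of_le (by norm_cast)) q _ _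

theorem timeDeriv_lap (hw : ContDiff ℝ ∞ (uncurry w)) :
    timeDeriv (fun s => lap (w s)) = fun s => lap (timeDeriv w s) := by
  funext t p
  have hxx := hasDerivAt_timeDeriv
    ((contDiff_uncurry_pdx (contDiff_uncurry_pdx hw)).differentiable (by simp)) t p
  have hyy := hasDerivAt_timeDeriv
    ((contDiff_uncurry_pdy (contDiff_uncurry_pdy hw)).differentiable (by simp)) t p
  rw [timeDeriv_pdx (contDiff_uncurry_pdx hw), timeDeriv_pdx hw] at hxx
  rw [timeDeriv_pdy (contDiff_uncurry_pdy hw), timeDeriv_pdy hw] at hyy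
  exact (hxx.add hyy).deriv

theorem hasDerivAt_lap (hw : ContDiff ℝ ∞ (uncurry w)) (t : ℝ) (p : ℝ × ℝ) :
    HasDerivAt (fun s => lap (w s) p) (lap (timeDeriv w t) p) t := by
  simpa only [timeDeriv_lap hw] using
    hasDerivAt_timeDeriv ((contDiff_uncurry_lap hw).differentiable (by simp)) t p

theorem hasDerivAt_nsq {n : WithTop ℕ∞} (hw : ContDiff ℝ n (uncurry w)) (hn : n ≠ 0)
    (t : ℝ) :
    HasDerivAt (fun s => nsq (w s)) (2 * ip (w t) (timeDeriv w t)) t := by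
  have hsq : ContDiff ℝ n (uncurry fun s p => w s p ^ 2) := hw.pow 2
  refine (hasDerivAt_setIntegral_of_isBounded hsq hn
    (Metric.isBounded_closedBall.subset disk_subset_closedBall) measurableSet_disk t).congr_deriv ?_
  rw [ip, ← integral_const_mul]
  congr with p
  rw [timeDeriv, ((hasDerivAt_timeDeriv (hw.differentiable hn) t p).fun_pow 2).deriv]
  ring

theorem hasDerivAt_gradNsq (hw : ContDiff ℝ ∞ (uncurry w)) (t : ℝ) :
    HasDerivAt (fun s => gradNsq (w s))
      (2 * (ip (pdx (w t)) (pdx (timeDeriv w t)) + ip (pdy (w t)) (pdy (timeDeriv w t)))) t := by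
  have hx := hasDerivAt_nsq (contDiff_uncurry_pdx hw) (by simp) t
  have hy := hasDerivAt_nsq (contDiff_uncurry_pdy hw) (by simp) t
  simp only [timeDeriv_pdx hw] at hx
  simp only [timeDeriv_pdy hw] at hy
  exact (hx.add hy).congr_deriv (by ring)

end PlanarFlows

section EnergyIdentity

variable {ε R : ℝ} {a a' b b' : ℝ × ℝ → ℝ}

theorem energy_rate_eq_setIntegral (ha : ContDiff ℝ ∞ a) (ha' : ContDiff ℝ ∞ a')
    (hb : ContDiff ℝ ∞ b) (hb' : ContDiff ℝ ∞ b')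
    (hbc : ∀ p ∈ bdry, a p = 0 ∧ b p = 0 ∧ pdx b p = 0 ∧ pdy b p = 0) :
    2 * ip a a' + ε * (2 * (ip (pdx a) (pdx a') + ip (pdy a) (pdy a')))
        + 2 * (ip (pdx b) (pdx b') + ip (pdy b) (pdy b')) + ε * (2 * ip (lap b) (lap b'))
      = ∫ p in disk, (2 * (a p * (a' p - ε * lap a' p))
          + 2 * (b p * (ε * lap (lap b') p - lap b' p))) := by
  have hsplit : 2 * ip a a' + ε * (2 * (ip (pdx a) (pdx a') + ip (pdy a) (pdy a')))
        + 2 * (ip (pdx b) (pdx b') + ip (pdy b) (pdy b')) + ε * (2 * ip (lap b) (lap b'))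
      = ∫ p in disk, (2 * (a p * a' p) + ε * (2 * (pdx a p * pdx a' p + pdy a p * pdy a' p))
          + 2 * (pdx b p * pdx b' p + pdy b p * pdy b' p) + ε * (2 * (lap b p * lap b' p))) := by
    rw [integral_add, integral_add, integral_add, integral_const_mul, integral_const_mul,
      integral_const_mul, integral_const_mul, integral_const_mul, integral_const_mul,
      integral_add, integral_add]
    · rfl
    all_goals exact Continuous.integrableOn_disk (by fun_prop)
  rw [hsplit]
  refine setIntegral_disk_eq_of_sub_mem (by fun_prop) (by fun_prop) ?_
  have hD := vanishingFieldDivergences.sub_mem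
    (vanishingFieldDivergences.add_mem
      (vanishingFieldDivergences.smul_mem (2 * ε)
        (mul_lap_add_grad_mem ha ha' fun p hp => (hbc p hp).1))
      (vanishingFieldDivergences.smul_mem 2
        (mul_lap_add_grad_mem hb hb' fun p hp => (hbc p hp).2.1)))
    (vanishingFieldDivergences.smul_mem (2 * ε)
      (mul_lap_sub_lap_mul_mem hb hb'.lap fun p hp => (hbc p hp).2))
  convert hD using 1
  funext p
  simp only [Pi.add_apply, Pi.sub_apply, Pi.smul_apply, smul_eq_mul]
  ring

theorem setIntegral_pairing_rhs_eq (ha : ContDiff ℝ ∞ a) (hb : ContDiff ℝ ∞ b)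
    (hbc : ∀ p ∈ bdry, a p = 0 ∧ b p = 0 ∧ pdx b p = 0 ∧ pdy b p = 0) :
    ∫ p in disk, (2 * (a p * ((1 / R) * lap a p + R * azim b p
          + jac b (fun q => a q - ε * lap a q) p))
        + 2 * (b p * (-(1 / R) * lap (lap b) p + ε * R * lap (azim a) p
          + jac (fun q => lap b q - ε * lap (lap b) q) b p + ε * jac (lap a) a p)))
      = -(2 / R) * (gradNsq a + nsq (lap b))
        + 2 * R * ip (azim b) (fun q => a q - ε * lap a q) := by
  have ha₀ : ∀ p ∈ bdry, a p = 0 := fun p hp => (hbc p hp).1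
  have hb₀ : ∀ p ∈ bdry, b p = 0 := fun p hp => (hbc p hp).2.1
  have hsplit : -(2 / R) * (gradNsq a + nsq (lap b))
        + 2 * R * ip (azim b) (fun q => a q - ε * lap a q)
      = ∫ p in disk, (-(2 / R) * (pdx a p ^ 2 + pdy a p ^ 2 + lap b p ^ 2)
          + 2 * R * (azim b p * (a p - ε * lap a p))) := by
    rw [integral_add, integral_const_mul, integral_const_mul, integral_add, integral_add]
    · rfl
    all_goals exact Continuous.integrableOn_disk (by fun_prop)
  rw [hsplit]
  refine setIntegral_disk_eq_of_sub_mem (by fun_prop) (by fun_prop) ?_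
  have hh : ContDiff ℝ ∞ fun q => lap b q - ε * lap (lap b) q := by fun_prop
  -- Green for the `1/R` terms, skewness of `∂_θ` for the `εR` terms, and the cyclic symmetry
  -- of `∫ f J(g, h)` for the Jacobian terms
  have hD := vanishingFieldDivergences.sub_mem
    (vanishingFieldDivergences.add_mem
      (vanishingFieldDivergences.add_mem
        (vanishingFieldDivergences.sub_mem
          (vanishingFieldDivergences.smul_mem (2 / R) (mul_lap_add_grad_mem ha ha ha₀))
          (vanishingFieldDivergences.smul_mem (2 / R)
            (mul_lap_sub_lap_mul_mem hb hb.lap fun p hp => (hbc p hp).2)))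
        (vanishingFieldDivergences.smul_mem (2 * ε * R)
          (mul_azim_add_azim_mul_mem hb ha.lap hb₀)))
      (vanishingFieldDivergences.sub_mem
        (vanishingFieldDivergences.smul_mem 2 (mul_jac_add_mul_jac_mem ha hb ha ha₀))
        (vanishingFieldDivergences.smul_mem (2 * ε)
          (mul_jac_add_mul_jac_mem ha hb ha.lap ha₀))))
    (mul_jac_add_mul_jac_mem hb hb hh hb₀)
  convert hD using 1
  funext p
  simp (disch := fun_prop (disch := simp)) only [Pi.add_apply, Pi.sub_apply, Pi.smul_apply,
    smul_eq_mul, lap_azim ha, azim, jac, pdx_sub, pdy_sub, pdx_mul, pdy_mul, pdx_const, pdy_const]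
  ring

end EnergyIdentity

theorem energy_identity_general (ε R : ℝ)
    (w ψ : ℝ → ℝ × ℝ → ℝ)
    (hw : ContDiff ℝ (⊤ : ℕ∞) (fun q : ℝ × (ℝ × ℝ) => w q.1 q.2))
    (hψ : ContDiff ℝ (⊤ : ℕ∞) (fun q : ℝ × (ℝ × ℝ) => ψ q.1 q.2))
    (heq1 : ∀ t : ℝ, ∀ p ∈ disk,
      deriv (fun s => w s p - ε * lap (w s) p) t
        = (1 / R) * lap (w t) p + R * azim (ψ t) p
          + jac (ψ t) (fun q => w t q - ε * lap (w t) q) p)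
    (heq2 : ∀ t : ℝ, ∀ p ∈ disk,
      deriv (fun s => ε * lap (lap (ψ s)) p - lap (ψ s) p) t
        = -(1 / R) * lap (lap (ψ t)) p + ε * R * lap (azim (w t)) p
          + jac (fun q => lap (ψ t) q - ε * lap (lap (ψ t)) q) (ψ t) p
          + ε * jac (lap (w t)) (w t) p)
    (hbc : ∀ t : ℝ, ∀ p ∈ bdry,
      w t p = 0 ∧ ψ t p = 0 ∧ pdx (ψ t) p = 0 ∧ pdy (ψ t) p = 0) :
    ∀ t : ℝ,
      deriv (fun s => nsq (w s) + ε * gradNsq (w s) + gradNsq (ψ s)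
        + ε * nsq (lap (ψ s))) t
      = -(2 / R) * (gradNsq (w t) + nsq (lap (ψ t)))
        + 2 * R * ip (azim (ψ t)) (fun q => w t q - ε * lap (w t) q) := by
  intro t
  have hslice {u : ℝ → ℝ × ℝ → ℝ} (hu : ContDiff ℝ ∞ (uncurry u)) :
      ContDiff ℝ ∞ (u t) :=
    hu.comp (contDiff_const.prodMk contDiff_id)
  have hE := (((hasDerivAt_nsq hw (by simp) t).fun_add
    ((hasDerivAt_gradNsq hw t).const_mul ε)).fun_add (hasDerivAt_gradNsq hψ t)).fun_add
    ((hasDerivAt_nsq (contDiff_uncurry_lap hψ) (by simp) t).const_mul ε)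
  rw [hE.deriv, timeDeriv_lap hψ, energy_rate_eq_setIntegral (hslice hw)
    (hslice (contDiff_uncurry_timeDeriv hw)) (hslice hψ) (hslice (contDiff_uncurry_timeDeriv hψ))
    (hbc t), ← setIntegral_pairing_rhs_eq (hslice hw) (hslice hψ) (hbc t)]
  refine setIntegral_congr_fun measurableSet_disk fun p hp => ?_
  have h₁ := ((hasDerivAt_timeDeriv (hw.differentiable (by simp)) t p).fun_sub
    ((hasDerivAt_lap hw t p).const_mul ε)).deriv
  have h₂ := (((hasDerivAt_lap (contDiff_uncurry_lap hψ) t p).const_mul ε).fun_sub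
    (hasDerivAt_lap hψ t p)).deriv
  simp only [timeDeriv_lap hψ] at h₂
  rw [← h₁, ← h₂, heq1 t p hp, heq2 t p hp]

/-- The basic energy identity of the energy stability analysis:
`dE/dt = −(2/R)I₁ + 2R·I₂` for solutions of the perturbed second grade
Poiseuille flow equations. -/
theorem energy_identity (ε R : ℝ) (hε : 0 ≤ ε) (hR : 0 < R)
    (w ψ : ℝ → ℝ × ℝ → ℝ)
    (hw : ContDiff ℝ (⊤ : ℕ∞) (fun q : ℝ × (ℝ × ℝ) => w q.1 q.2))
    (hψ : ContDiff ℝ (⊤ : ℕ∞) (fun q : ℝ × (ℝ × ℝ) => ψ q.1 q.2))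
    (heq1 : ∀ t : ℝ, ∀ p ∈ disk,
      deriv (fun s => w s p - ε * lap (w s) p) t
        = (1 / R) * lap (w t) p + R * azim (ψ t) p
          + jac (ψ t) (fun q => w t q - ε * lap (w t) q) p)
    (heq2 : ∀ t : ℝ, ∀ p ∈ disk,
      deriv (fun s => ε * lap (lap (ψ s)) p - lap (ψ s) p) t
        = -(1 / R) * lap (lap (ψ t)) p + ε * R * lap (azim (w t)) p
          + jac (fun q => lap (ψ t) q - ε * lap (lap (ψ t)) q) (ψ t) p
          + ε * jac (lap (w t)) (w t) p)
    (hbc : ∀ t : ℝ, ∀ p ∈ bdry,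
      w t p = 0 ∧ ψ t p = 0 ∧ pdx (ψ t) p = 0 ∧ pdy (ψ t) p = 0) :
    ∀ t : ℝ,
      deriv (fun s => nsq (w s) + ε * gradNsq (w s) + gradNsq (ψ s)
        + ε * nsq (lap (ψ s))) t
      = -(2 / R) * (gradNsq (w t) + nsq (lap (ψ t)))
        + 2 * R * ip (azim (ψ t)) (fun q => w t q - ε * lap (w t) q) :=
  energy_identity_general ε R w ψ hw hψ heq1 heq2 hbc
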